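/- arXiv:2504.20730 — 7 statements merged into one kernel-verified Lean document; each statement's English description precedes it below -/
import Mathlib

section
/- Let S ∈ ℂ^(2n×2n) be conjugate symplectic, i.e. S Ω S† = Ω with Ω = [[0, Iₙ], [−Iₙ, 0]]. Then for every nonzero complex number λ, λ is an eigenvalue of S†S if and only if λ⁻¹ is an eigenvalue of S†S; consequently the singular values of S come in reciprocal pairs (d, d⁻¹). -/
open Matrix

/-- The standard `2n × 2n` symplectic form `Ω = [[0, Iₙ], [−Iₙ, 0]]`. -/
def Omega (n : ℕ) : Matrix (Fin n ⊕ Fin n) (Fin n ⊕ Fin n) ℂ :=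
  Matrix.fromBlocks 0 1 (-1) 0

/-- A matrix `A ∈ ℂ^(2n×2n)` is conjugate symplectic if `A Ω A† = Ω`. -/
def ConjSymplectic {n : ℕ} (A : Matrix (Fin n ⊕ Fin n) (Fin n ⊕ Fin n) ℂ) : Prop :=
  A * Omega n * Aᴴ = Omega n

/-!
Since `Ω² = -1`, `S Ω S† = Ω` forces `S† Ω S = Ω`, and then `M = S†S` satisfies `M Ω M = Ω`.
So `M` is invertible with `M⁻¹ = Ω M Ω⁻¹`; being similar to `M`, the inverse has the same
spectrum, i.e. the spectrum of `M` is closed under `λ ↦ λ⁻¹`.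
-/

theorem mul_mul_eq_swap_of_mul_self_eq_neg_one {M : Type*} [Monoid M] [HasDistribNeg M]
    [IsDedekindFiniteMonoid M] {a b j : M} (hj : j * j = -1) (h : a * j * b = j) :
    b * j * a = j := by
  have hab : (j * a) * -(j * b) = 1 := by
    rw [mul_neg, mul_assoc, ← mul_assoc a, h, hj, neg_neg]
  have hba : (j * b) * (j * a) = -1 := by
    rw [← neg_eq_iff_eq_neg, ← neg_mul, mul_eq_one_comm.mp hab]
  calc b * j * a = -(j * j) * (b * j * a) := by rw [hj, neg_neg, one_mul]
    _ = -(j * ((j * b) * (j * a))) := by noncomm_ring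
    _ = j := by rw [hba, mul_neg_one, neg_neg]

theorem spectrum.inv_eq_self_of_mul_mul_self_eq {𝕜 A : Type*} [Field 𝕜] [Ring A] [Algebra 𝕜 A]
    {a j : A} (hj : IsUnit j) (h : a * j * a = j) : (spectrum 𝕜 a)⁻¹ = spectrum 𝕜 a := by
  obtain ⟨j, rfl⟩ := hj
  have hr : a * (j * a * ↑j⁻¹) = 1 := by
    rw [← mul_assoc, ← mul_assoc, h, Units.mul_inv]
  have hl : (↑j⁻¹ * a * j) * a = 1 := by
    rw [mul_assoc, mul_assoc, ← mul_assoc a, h, Units.inv_mul]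
  have hlr : ↑j⁻¹ * a * j = j * a * ↑j⁻¹ := left_inv_eq_right_inv hl hr
  let u : Aˣ := ⟨a, j * a * ↑j⁻¹, hr, hlr ▸ hl⟩
  calc (spectrum 𝕜 a)⁻¹ = spectrum 𝕜 (↑u⁻¹ : A) := spectrum.map_inv u
    _ = spectrum 𝕜 a := spectrum.units_conjugate

theorem Matrix.det_sub_smul_one_eq_zero_iff_mem_spectrum {ι K : Type*} [Fintype ι]
    [DecidableEq ι] [Field K] (A : Matrix ι ι K) (μ : K) :
    (A - μ • (1 : Matrix ι ι K)).det = 0 ↔ μ ∈ spectrum K A := by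
  rw [mem_spectrum_iff_isRoot_charpoly, Polynomial.IsRoot, eval_charpoly, ← neg_sub,
    det_neg, scalar_apply, smul_one_eq_diagonal]
  simp

theorem Omega_mul_self (n : ℕ) : Omega n * Omega n = -1 := by
  simp [Omega, fromBlocks_multiply, ← fromBlocks_one, fromBlocks_neg]

theorem isUnit_Omega (n : ℕ) : IsUnit (Omega n) :=
  ⟨⟨Omega n, -Omega n, by rw [mul_neg, Omega_mul_self, neg_neg],
    by rw [neg_mul, Omega_mul_self, neg_neg]⟩, rfl⟩

namespace ConjSymplectic

variable {n : ℕ} {S : Matrix (Fin n ⊕ Fin n) (Fin n ⊕ Fin n) ℂ}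

theorem conjTranspose_mul_Omega_mul (hS : ConjSymplectic S) : Sᴴ * Omega n * S = Omega n :=
  mul_mul_eq_swap_of_mul_self_eq_neg_one (Omega_mul_self n) hS

theorem gram_mul_Omega_mul_gram (hS : ConjSymplectic S) :
    Sᴴ * S * Omega n * (Sᴴ * S) = Omega n := by
  calc Sᴴ * S * Omega n * (Sᴴ * S) = Sᴴ * (S * Omega n * Sᴴ) * S := by noncomm_ring
    _ = Omega n := by rw [hS, hS.conjTranspose_mul_Omega_mul]

end ConjSymplectic

theorem conjSymplectic_eigenvalues_reciprocal_pairs_general (n : ℕ)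
    (S : Matrix (Fin n ⊕ Fin n) (Fin n ⊕ Fin n) ℂ) (hS : ConjSymplectic S)
    (lam : ℂ) :
    (Sᴴ * S - lam • (1 : Matrix (Fin n ⊕ Fin n) (Fin n ⊕ Fin n) ℂ)).det = 0 ↔
      (Sᴴ * S - lam⁻¹ • (1 : Matrix (Fin n ⊕ Fin n) (Fin n ⊕ Fin n) ℂ)).det = 0 := by
  rw [det_sub_smul_one_eq_zero_iff_mem_spectrum, det_sub_smul_one_eq_zero_iff_mem_spectrum,
    ← Set.mem_inv, spectrum.inv_eq_self_of_mul_mul_self_eq (isUnit_Omega n)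
      hS.gram_mul_Omega_mul_gram]

/-- For a conjugate symplectic `S`, a nonzero `λ` is an eigenvalue of `S†S` iff `λ⁻¹` is;
hence the singular values of `S` come in reciprocal pairs. -/
theorem conjSymplectic_eigenvalues_reciprocal_pairs (n : ℕ)
    (S : Matrix (Fin n ⊕ Fin n) (Fin n ⊕ Fin n) ℂ) (hS : ConjSymplectic S)
    (lam : ℂ) (hlam : lam ≠ 0) :
    (Sᴴ * S - lam • (1 : Matrix (Fin n ⊕ Fin n) (Fin n ⊕ Fin n) ℂ)).det = 0 ↔
      (Sᴴ * S - lam⁻¹ • (1 : Matrix (Fin n ⊕ Fin n) (Fin n ⊕ Fin n) ℂ)).det = 0 :=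
  conjSymplectic_eigenvalues_reciprocal_pairs_general n S hS lam
end

section
/- Let A ∈ ℂ^(n×n) (n ≥ 2) and suppose A = U Σ V† with U, V ∈ ℂ^(n×n) unitary and Σ = diag(σ₁, …, σₙ) real diagonal with σ₁ = σ₂ > σ₃ > … > σₙ > 0. Then, for unitary matrices Ũ, Ṽ ∈ ℂ^(n×n), one has A = Ũ Σ Ṽ† if and only if Ũ = U · diag(W, Θ) and Ṽ = V · diag(W, Θ), where W is an arbitrary 2×2 complex unitary matrix, Θ = diag(e^{iθ₃}, …, e^{iθₙ}) for some θ₃, …, θₙ ∈ ℝ, and diag(W, Θ) denotes the block-diagonal n×n matrix with W in the leading 2×2 block and Θ in the trailing (n−2)×(n−2) block. -/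
open Matrix

/-- The block-diagonal `n × n` matrix `diag(W, Θ)` with a `2 × 2` block `W` in the leading
position and the diagonal phase matrix `Θ = diag(e^{iθ₃}, …, e^{iθₙ})` in the trailing
`(n−2) × (n−2)` block. -/
noncomputable def blockDiagWTheta (n : ℕ) (W : Matrix (Fin 2) (Fin 2) ℂ) (θ : Fin n → ℝ) :
    Matrix (Fin n) (Fin n) ℂ :=
  Matrix.of fun i j =>
    if h : (i : ℕ) < 2 ∧ (j : ℕ) < 2 then W ⟨i, h.1⟩ ⟨j, h.2⟩
    else if i = j then Complex.exp ((θ i : ℂ) * Complex.I) else 0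

/-!
If `U Σ V† = U₂ Σ V₂†`, then `P = U†U₂` and `Q = V†V₂` satisfy `ΣQ = PΣ` and `ΣP = QΣ`, so `Q`
commutes with `Σ²`. As the `σᵢ` are positive, `Q` then commutes with `Σ` itself, and `P = Q` since
`Σ` is invertible. A unitary commuting with `Σ` vanishes outside the blocks where `σ` is constant,
which under the ordering hypotheses are `{1, 2}` and the singletons: it is exactly some
`diag(W, Θ)`. Conversely, conjugating `Σ` by a unitary that commutes with it changes nothing.
-/

namespace Matrix

variable {ι : Type*} [Fintype ι]

theorem submatrix_conjTranspose_mul_self {κ R : Type*} [Fintype κ] [Semiring R] [StarRing R]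
    (P : Matrix ι ι R) (e : κ ↪ ι) (h : ∀ k ∉ Set.range e, ∀ i, P k (e i) = 0) :
    (P.submatrix e e)ᴴ * P.submatrix e e = (Pᴴ * P).submatrix e e := by
  ext a b
  simp only [submatrix_apply, mul_apply, conjTranspose_apply]
  rw [← Finset.sum_map Finset.univ e fun k => star (P k (e a)) * P k (e b)]
  refine Finset.sum_subset (Finset.subset_univ _) fun k _ hk => ?_
  rw [h k (by simpa using hk) a, star_zero, zero_mul]

variable [DecidableEq ι]

theorem commute_diagonal_iff {R : Type*} [CommRing R] [NoZeroDivisors R] {d : ι → R}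
    {M : Matrix ι ι R} : Commute (diagonal d) M ↔ ∀ i j, d i ≠ d j → M i j = 0 := by
  simp only [commute_iff_eq, ← Matrix.ext_iff, diagonal_mul, mul_diagonal]
  refine forall₂_congr fun i j => ?_
  rw [mul_comm, ← sub_eq_zero, ← mul_sub, mul_eq_zero, sub_eq_zero]
  tauto

theorem intertwine_of_mul_mul_conjTranspose_eq {R : Type*} [Semiring R] [Star R]
    {D U V U₂ V₂ : Matrix ι ι R} (hU : Uᴴ * U = 1) (hV₂ : V₂ᴴ * V₂ = 1)
    (h : U * D * Vᴴ = U₂ * D * V₂ᴴ) : D * (Vᴴ * V₂) = Uᴴ * U₂ * D := by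
  calc D * (Vᴴ * V₂) = Uᴴ * (U * D * Vᴴ) * V₂ := by
        simp only [← Matrix.mul_assoc, hU, Matrix.one_mul]
    _ = Uᴴ * U₂ * D := by
        rw [h]; simp only [Matrix.mul_assoc, hV₂, Matrix.mul_one]

theorem conjTranspose_mul_self_eq_one_of_mul {R : Type*} [Semiring R] [StarRing R]
    {U P : Matrix ι ι R} (hU : Uᴴ * U = 1) (h : (U * P)ᴴ * (U * P) = 1) : Pᴴ * P = 1 := by
  rwa [conjTranspose_mul, Matrix.mul_assoc, ← Matrix.mul_assoc Uᴴ, hU, Matrix.one_mul] at h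

theorem norm_apply_self_eq_one {P : Matrix ι ι ℂ} (hP : Pᴴ * P = 1) {j : ι}
    (h : ∀ k ≠ j, P k j = 0) : ‖P j j‖ = 1 := by
  have hjj := congrFun (congrFun hP j) j
  rw [mul_apply, Finset.sum_eq_single j (fun k _ hk => by rw [h k hk, mul_zero])
    (by simp), one_apply_eq, conjTranspose_apply, Complex.star_def, Complex.conj_mul'] at hjj
  exact (pow_eq_one_iff_of_nonneg (norm_nonneg _) two_ne_zero).1 (by exact_mod_cast hjj)

theorem eq_and_commute_of_intertwine {σ : ι → ℝ} (hσ : ∀ i, 0 < σ i) {P Q : Matrix ι ι ℂ}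
    (hQP : diagonal (fun i => (σ i : ℂ)) * Q = P * diagonal (fun i => (σ i : ℂ)))
    (hPQ : diagonal (fun i => (σ i : ℂ)) * P = Q * diagonal (fun i => (σ i : ℂ))) :
    P = Q ∧ Commute (diagonal (fun i => (σ i : ℂ))) Q := by
  set D := diagonal (fun i => (σ i : ℂ))
  have hsq : Commute (D * D) Q := by
    rw [commute_iff_eq, Matrix.mul_assoc, hQP, ← Matrix.mul_assoc, hPQ, Matrix.mul_assoc]
  have hDQ : Commute D Q := by
    rw [diagonal_mul_diagonal] at hsq
    refine commute_diagonal_iff.2 fun i j hij => commute_diagonal_iff.1 hsq i j fun hsq' => hij ?_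
    have hij' : σ i * σ i = σ j * σ j := by exact_mod_cast hsq'
    rcases mul_self_eq_mul_self_iff.1 hij' with h | h
    · exact_mod_cast h
    · linarith [hσ i, hσ j]
  have hD : IsUnit D :=
    isUnit_diagonal.2 (Pi.isUnit_iff.2 fun i => (Complex.ofReal_ne_zero.2 (hσ i).ne').isUnit)
  exact ⟨hD.mul_left_injective (hQP.symm.trans hDQ.eq), hDQ⟩

theorem svd_eq_iff {σ : ι → ℝ} (hσ : ∀ i, 0 < σ i) {U V U₂ V₂ : Matrix ι ι ℂ}
    (hU : Uᴴ * U = 1) (hV : Vᴴ * V = 1) (hU₂ : U₂ᴴ * U₂ = 1) (hV₂ : V₂ᴴ * V₂ = 1) :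
    U * diagonal (fun i => (σ i : ℂ)) * Vᴴ = U₂ * diagonal (fun i => (σ i : ℂ)) * V₂ᴴ ↔
      ∃ P, Commute (diagonal (fun i => (σ i : ℂ))) P ∧ U₂ = U * P ∧ V₂ = V * P := by
  set D := diagonal (fun i => (σ i : ℂ))
  constructor
  · intro h
    have hD : Dᴴ = D := by
      simp only [D, diagonal_conjTranspose, Pi.star_def, Complex.star_def, Complex.conj_ofReal]
    have h' : V * D * Uᴴ = V₂ * D * U₂ᴴ := by
      simpa only [conjTranspose_mul, conjTranspose_conjTranspose, hD, Matrix.mul_assoc]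
        using congrArg conjTranspose h
    obtain ⟨hPQ, hDQ⟩ := eq_and_commute_of_intertwine hσ
      (intertwine_of_mul_mul_conjTranspose_eq hU hV₂ h)
      (intertwine_of_mul_mul_conjTranspose_eq hV hU₂ h')
    refine ⟨Uᴴ * U₂, hPQ ▸ hDQ, ?_, ?_⟩
    · rw [← Matrix.mul_assoc, mul_eq_one_comm.1 hU, Matrix.one_mul]
    · rw [hPQ, ← Matrix.mul_assoc, mul_eq_one_comm.1 hV, Matrix.one_mul]
  · rintro ⟨P, hDP, rfl, rfl⟩
    have hP : P * Pᴴ = 1 := mul_eq_one_comm.1 (conjTranspose_mul_self_eq_one_of_mul hU hU₂)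
    calc U * D * Vᴴ = U * (D * P) * Pᴴ * Vᴴ := by
          simp only [Matrix.mul_assoc, hP, Matrix.mul_one]
      _ = U * P * D * (V * P)ᴴ := by
          rw [hDP.eq, conjTranspose_mul]; simp only [Matrix.mul_assoc]

end Matrix

section LeadingPair

variable {n : ℕ} {σ : Fin n → ℝ}

theorem apply_lt_apply_of_lt_of_two_le (h12 : ∀ i j : Fin n, (i : ℕ) < 2 → (j : ℕ) < 2 → σ i = σ j)
    (hdec : ∀ i j : Fin n, 1 ≤ (i : ℕ) → i < j → σ j < σ i)
    {i j : Fin n} (hij : i < j) (hj : 2 ≤ (j : ℕ)) : σ j < σ i := by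
  rcases Nat.eq_zero_or_pos i with hi | hi
  · have hn := j.isLt
    rw [h12 i ⟨1, by omega⟩ (by omega) (by simp)]
    exact hdec _ j le_rfl (Fin.lt_def.2 (by simp; omega))
  · exact hdec i j hi hij

theorem apply_eq_apply_iff_eq_or_lt_two (h12 : ∀ i j : Fin n, (i : ℕ) < 2 → (j : ℕ) < 2 → σ i = σ j)
    (hdec : ∀ i j : Fin n, 1 ≤ (i : ℕ) → i < j → σ j < σ i) (i j : Fin n) :
    σ i = σ j ↔ i = j ∨ ((i : ℕ) < 2 ∧ (j : ℕ) < 2) := by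
  refine ⟨fun h => ?_, ?_⟩
  · rcases lt_trichotomy i j with hij | rfl | hij
    · by_contra hb
      exact (apply_lt_apply_of_lt_of_two_le h12 hdec hij (by omega)).ne' h
    · exact Or.inl rfl
    · by_contra hb
      exact (apply_lt_apply_of_lt_of_two_le h12 hdec hij (by omega)).ne h
  · rintro (rfl | ⟨hi, hj⟩)
    exacts [rfl, h12 i j hi hj]

end LeadingPair

section blockDiagWTheta

variable {n : ℕ} (W : Matrix (Fin 2) (Fin 2) ℂ) (θ : Fin n → ℝ)

theorem blockDiagWTheta_apply_of_lt_two {i j : Fin n} (hi : (i : ℕ) < 2) (hj : (j : ℕ) < 2) :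
    blockDiagWTheta n W θ i j = W ⟨i, hi⟩ ⟨j, hj⟩ := by
  simp only [blockDiagWTheta, of_apply, dif_pos (And.intro hi hj)]

theorem blockDiagWTheta_apply_self {i : Fin n} (hi : ¬ (i : ℕ) < 2) :
    blockDiagWTheta n W θ i i = Complex.exp ((θ i : ℂ) * Complex.I) := by
  simp only [blockDiagWTheta, of_apply, dif_neg (fun h : _ ∧ _ => hi h.1), if_true]

theorem blockDiagWTheta_apply_of_ne {i j : Fin n} (h : ¬ ((i : ℕ) < 2 ∧ (j : ℕ) < 2))
    (hij : i ≠ j) : blockDiagWTheta n W θ i j = 0 := by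
  simp only [blockDiagWTheta, of_apply, dif_neg h, if_neg hij]

end blockDiagWTheta

theorem exists_eq_blockDiagWTheta {n : ℕ} (hn : 2 ≤ n) {P : Matrix (Fin n) (Fin n) ℂ}
    (hP : Pᴴ * P = 1) (hP0 : ∀ i j : Fin n, ¬ ((i : ℕ) < 2 ∧ (j : ℕ) < 2) → i ≠ j → P i j = 0) :
    ∃ (W : Matrix (Fin 2) (Fin 2) ℂ) (θ : Fin n → ℝ),
      Wᴴ * W = 1 ∧ P = blockDiagWTheta n W θ := by
  let e := Fin.castLEEmb hn
  have he : ∀ k ∉ Set.range e, ¬ (k : ℕ) < 2 := fun k hk hk2 => hk ⟨⟨k, hk2⟩, rfl⟩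
  refine ⟨P.submatrix e e, fun i => (P i i).arg, ?_, ?_⟩
  · rw [submatrix_conjTranspose_mul_self P e fun k hk i => hP0 k (e i) (fun h => he k hk h.1)
      (fun h => he k hk (by rw [h]; exact i.2)), hP, submatrix_one_embedding]
  ext i j
  by_cases hb : (i : ℕ) < 2 ∧ (j : ℕ) < 2
  · rw [blockDiagWTheta_apply_of_lt_two _ _ hb.1 hb.2]; rfl
  by_cases hij : i = j
  · subst hij
    have hi : ¬ (i : ℕ) < 2 := fun h => hb ⟨h, h⟩
    rw [blockDiagWTheta_apply_self _ _ hi]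
    conv_lhs => rw [← Complex.norm_mul_exp_arg_mul_I (P i i),
      norm_apply_self_eq_one hP fun k hk => hP0 k i (fun h => hi h.2) hk]
    simp
  · rw [blockDiagWTheta_apply_of_ne _ _ hb hij, hP0 i j hb hij]

/-- Non-uniqueness of the SVD when the two largest singular values coincide:
`A = U₂ Σ V₂†` iff `U₂ = U·diag(W,Θ)` and `V₂ = V·diag(W,Θ)` for some unitary `2×2`
matrix `W` and some phases `θ`. -/
theorem svd_uniqueness_one_degenerate_pair (n : ℕ) (hn : 2 ≤ n)
    (A U V U₂ V₂ : Matrix (Fin n) (Fin n) ℂ) (σ : Fin n → ℝ)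
    (hU : Uᴴ * U = 1) (hV : Vᴴ * V = 1)
    (hU₂ : U₂ᴴ * U₂ = 1) (hV₂ : V₂ᴴ * V₂ = 1)
    (h12 : σ ⟨0, by omega⟩ = σ ⟨1, by omega⟩)
    (hdec : ∀ i j : Fin n, 1 ≤ (i : ℕ) → i < j → σ j < σ i)
    (hpos : ∀ i : Fin n, 0 < σ i)
    (hA : A = U * diagonal (fun i => ((σ i : ℝ) : ℂ)) * Vᴴ) :
    A = U₂ * diagonal (fun i => ((σ i : ℝ) : ℂ)) * V₂ᴴ ↔
      ∃ (W : Matrix (Fin 2) (Fin 2) ℂ) (θ : Fin n → ℝ),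
        Wᴴ * W = 1 ∧
        U₂ = U * blockDiagWTheta n W θ ∧
        V₂ = V * blockDiagWTheta n W θ := by
  have hblock (i j : Fin n) (hi : (i : ℕ) < 2) (hj : (j : ℕ) < 2) : σ i = σ j := by
    rcases (show (i : ℕ) = j ∨ ((i : ℕ) = 0 ∧ (j : ℕ) = 1) ∨ ((i : ℕ) = 1 ∧ (j : ℕ) = 0) by omega)
      with h | ⟨hi0, hj1⟩ | ⟨hi1, hj0⟩
    · rw [Fin.ext h]
    · rwa [show i = ⟨0, by omega⟩ from Fin.ext hi0, show j = ⟨1, by omega⟩ from Fin.ext hj1]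
    · rw [show i = ⟨1, by omega⟩ from Fin.ext hi1, show j = ⟨0, by omega⟩ from Fin.ext hj0, h12]
  have hσ (i j : Fin n) : (σ i : ℂ) = σ j ↔ i = j ∨ ((i : ℕ) < 2 ∧ (j : ℕ) < 2) := by
    rw [Complex.ofReal_inj, apply_eq_apply_iff_eq_or_lt_two hblock hdec]
  rw [hA, svd_eq_iff hpos hU hV hU₂ hV₂]
  constructor
  · rintro ⟨P, hDP, rfl, rfl⟩
    obtain ⟨W, θ, hW, rfl⟩ := exists_eq_blockDiagWTheta hn
      (conjTranspose_mul_self_eq_one_of_mul hU hU₂) fun i j hb hij =>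
      commute_diagonal_iff.1 hDP i j (by rw [Ne, hσ]; tauto)
    exact ⟨W, θ, hW, rfl, rfl⟩
  · rintro ⟨W, θ, -, rfl, rfl⟩
    refine ⟨_, commute_diagonal_iff.2 fun i j hne => ?_, rfl, rfl⟩
    rw [Ne, hσ, not_or] at hne
    exact blockDiagWTheta_apply_of_ne W θ hne.2 hne.1
end

section
/- Let S ∈ ℂ^(2n×2n) be conjugate symplectic with D = diag(d₁, …, dₙ, d₁⁻¹, …, dₙ⁻¹) where d₁ > d₂ > … > dₙ > 1 (so that all 2n singular values of S are distinct). Suppose S = U D V† and S = Ũ D Ṽ† are two Bloch–Messiah decompositions of S, i.e. U, V, Ũ, Ṽ are all unitary conjugate symplectic. Then there exist real numbers θ₁, …, θₙ such that Ũ = U Θ and Ṽ = V Θ, where Θ = diag(e^{iθ₁}, …, e^{iθₙ}, e^{iθ₁}, …, e^{iθₙ}). (Uniqueness of the Bloch–Messiah decomposition up to a repeated diagonal phase matrix.) -/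
open Matrix

/-- A matrix is unitary if `A† A = 1`. -/
def IsUnitaryMat {n : ℕ} (A : Matrix (Fin n ⊕ Fin n) (Fin n ⊕ Fin n) ℂ) : Prop :=
  Aᴴ * A = 1

/-!
Put `W = U†Ũ` and `X = V†Ṽ`. From `U D V† = Ũ D Ṽ†` one gets `D X = W D` and, taking adjoints,
`D W = X D`; hence `W` commutes with `D²`, whose diagonal entries are distinct, so `W` is diagonal
and then `X = W`. A unitary matrix is conjugate symplectic iff it commutes with `Ω`, so the
diagonal unitary `W = U†Ũ` commutes with `Ω`, which forces its entries at `(i, i)` and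
`(n + i, n + i)` to agree; these are the phases `e^{iθᵢ}`.
-/

theorem Commute.mul_self_right_of_mul_eq_mul {S : Type*} [Semigroup S] {a w x : S}
    (hx : a * x = w * a) (hw : a * w = x * a) : Commute w (a * a) :=
  calc w * (a * a) = a * x * a := by rw [← mul_assoc, hx]
    _ = a * a * w := by rw [mul_assoc, ← hw, mul_assoc]

theorem Commute.star_mul_left_of_mem_unitary {R : Type*} [Monoid R] [StarMul R] {a b x : R}
    (ha : a ∈ unitary R) (hax : Commute a x) (hbx : Commute b x) : Commute (star a * b) x := by
  refine Commute.mul_left ?_ hbx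
  rw [commute_unitary_iff_star_right_conjugate (Unitary.star_mem ha), _root_.star_star]
  exact (commute_unitary_iff_star_left_conjugate ha).mp hax

namespace Matrix

variable {ι : Type*} [Fintype ι] [DecidableEq ι]

theorem eq_diagonal_of_commute_diagonal {R : Type*} [CommRing R] [NoZeroDivisors R]
    {M : Matrix ι ι R} {δ : ι → R} (hδ : Function.Injective δ) (h : Commute M (diagonal δ)) :
    M = diagonal fun k => M k k := by
  ext i j
  rcases eq_or_ne i j with rfl | hij
  · simp
  · have hij' : M i j * (δ j - δ i) = 0 := by
      have := congr_fun₂ h.eq i j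
      simp only [mul_diagonal, diagonal_mul] at this
      linear_combination this
    rw [diagonal_apply_ne _ hij]
    exact (mul_eq_zero.mp hij').resolve_right (sub_ne_zero.mpr (hδ.ne hij.symm))

theorem exists_eq_mul_diagonal_of_mul_diagonal_mul_star_eq {ρ : ι → ℝ} (hpos : ∀ k, 0 < ρ k)
    (hinj : Function.Injective ρ) {U V U₂ V₂ : Matrix ι ι ℂ} (hU : U ∈ unitaryGroup ι ℂ)
    (hV : V ∈ unitaryGroup ι ℂ) (hU₂ : U₂ ∈ unitaryGroup ι ℂ) (hV₂ : V₂ ∈ unitaryGroup ι ℂ)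
    (h : U * diagonal (fun k => (ρ k : ℂ)) * star V =
      U₂ * diagonal (fun k => (ρ k : ℂ)) * star V₂) :
    ∃ w : ι → ℂ, U₂ = U * diagonal w ∧ V₂ = V * diagonal w := by
  set D := diagonal fun k => (ρ k : ℂ)
  set W := star U * U₂
  set X := star V * V₂
  have hDstar : star D = D := by
    simp [D, star_eq_conjTranspose, diagonal_conjTranspose, Pi.star_def]
  have hDX : D * X = W * D := by
    calc D * X = star U * (U * D * star V) * V₂ := by
          simp only [X, ← mul_assoc, (mem_unitaryGroup_iff').mp hU, one_mul]
      _ = W * D := by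
          rw [h]
          simp only [W, mul_assoc, (mem_unitaryGroup_iff').mp hV₂, mul_one]
  have hDW : D * W = X * D := by
    calc D * W = star V * star (U * D * star V) * U₂ := by
          simp only [W, star_mul, star_star, hDstar, ← mul_assoc, (mem_unitaryGroup_iff').mp hV,
            one_mul]
      _ = X * D := by
          rw [h]
          simp only [X, star_mul, star_star, hDstar, mul_assoc, (mem_unitaryGroup_iff').mp hU₂,
            mul_one]
  have hsq_inj : Function.Injective fun k => (ρ k : ℂ) * (ρ k : ℂ) := fun a b hab =>
    hinj <| (mul_self_inj (hpos a).le (hpos b).le).mp <|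
      Complex.ofReal_injective <| by push_cast; exact hab
  have hWdiag : W = diagonal fun k => W k k := by
    refine eq_diagonal_of_commute_diagonal hsq_inj ?_
    simpa only [D, diagonal_mul_diagonal] using Commute.mul_self_right_of_mul_eq_mul hDX hDW
  have hXW : X = W := by
    have hD : IsUnit D := isUnit_diagonal.mpr <| Pi.isUnit_iff.mpr fun k =>
      (Complex.ofReal_ne_zero.mpr (hpos k).ne').isUnit
    refine hD.mul_left_cancel ?_
    rw [hDX, hWdiag]
    exact commute_diagonal _ _
  refine ⟨fun k => W k k, ?_, ?_⟩
  · rw [← hWdiag, ← mul_assoc, (mem_unitaryGroup_iff).mp hU, one_mul]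
  · rw [← hWdiag, ← hXW, ← mul_assoc, (mem_unitaryGroup_iff).mp hV, one_mul]

theorem norm_eq_one_of_diagonal_mem_unitaryGroup {w : ι → ℂ} (hw : diagonal w ∈ unitaryGroup ι ℂ)
    (k : ι) : ‖w k‖ = 1 := by
  have h := congr_fun₂ ((mem_unitaryGroup_iff').mp hw) k k
  rw [star_eq_conjTranspose, diagonal_conjTranspose, diagonal_mul_diagonal, diagonal_apply_eq,
    one_apply_eq, Pi.star_apply, Complex.star_def, Complex.conj_mul'] at h
  exact (pow_eq_one_iff_of_nonneg (norm_nonneg _) two_ne_zero).mp (by exact_mod_cast h)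

end Matrix

open Matrix

theorem Function.Injective.sumElim_inv {ι : Type*} {d : ι → ℝ} (hd : Function.Injective d)
    (hd1 : ∀ i, 1 < d i) : Function.Injective (Sum.elim d fun i => (d i)⁻¹) :=
  hd.sumElim (inv_injective.comp hd) fun a b =>
    ((inv_lt_one_of_one_lt₀ (hd1 b)).trans (hd1 a)).ne'

theorem isUnitaryMat_iff_mem_unitaryGroup {n : ℕ} {A : Matrix (Fin n ⊕ Fin n) (Fin n ⊕ Fin n) ℂ} :
    IsUnitaryMat A ↔ A ∈ unitaryGroup _ ℂ :=
  mem_unitaryGroup_iff'.symm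

theorem conjSymplectic_iff_commute_omega {n : ℕ} {A : Matrix (Fin n ⊕ Fin n) (Fin n ⊕ Fin n) ℂ}
    (hA : A ∈ unitaryGroup _ ℂ) : ConjSymplectic A ↔ Commute A (Omega n) :=
  (commute_unitary_iff_star_right_conjugate hA).symm

theorem apply_inl_eq_apply_inr_of_diagonal_commute_omega {n : ℕ} {w : Fin n ⊕ Fin n → ℂ}
    (h : Commute (diagonal w) (Omega n)) (i : Fin n) : w (Sum.inl i) = w (Sum.inr i) := by
  simpa [Omega, diagonal_mul, mul_diagonal] using congr_fun₂ h.eq (Sum.inl i) (Sum.inr i)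

theorem bloch_messiah_uniqueness_general (n : ℕ)
    (S U V U₂ V₂ : Matrix (Fin n ⊕ Fin n) (Fin n ⊕ Fin n) ℂ) (d : Fin n → ℝ)
    (hdec : ∀ i j : Fin n, i < j → d j < d i) (hd1 : ∀ i : Fin n, 1 < d i)
    (hU : IsUnitaryMat U) (hUs : ConjSymplectic U)
    (hV : IsUnitaryMat V)
    (hU₂ : IsUnitaryMat U₂) (hU₂s : ConjSymplectic U₂)
    (hV₂ : IsUnitaryMat V₂)
    (hSUV : S = U *
      diagonal (Sum.elim (fun i => ((d i : ℝ) : ℂ)) (fun i => (((d i)⁻¹ : ℝ) : ℂ))) * Vᴴ)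
    (hSUV₂ : S = U₂ *
      diagonal (Sum.elim (fun i => ((d i : ℝ) : ℂ)) (fun i => (((d i)⁻¹ : ℝ) : ℂ))) * V₂ᴴ) :
    ∃ θ : Fin n → ℝ,
      U₂ = U * diagonal (Sum.elim (fun i => Complex.exp ((θ i : ℂ) * Complex.I))
                                  (fun i => Complex.exp ((θ i : ℂ) * Complex.I))) ∧
      V₂ = V * diagonal (Sum.elim (fun i => Complex.exp ((θ i : ℂ) * Complex.I))
                                  (fun i => Complex.exp ((θ i : ℂ) * Complex.I))) := by
  rw [isUnitaryMat_iff_mem_unitaryGroup] at hU hV hU₂ hV₂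
  set ρ : Fin n ⊕ Fin n → ℝ := Sum.elim d fun i => (d i)⁻¹
  have hρpos : ∀ k, 0 < ρ k := by
    rintro (i | i)
    exacts [one_pos.trans (hd1 i), inv_pos.mpr (one_pos.trans (hd1 i))]
  have hδ : Sum.elim (fun i => ((d i : ℝ) : ℂ)) (fun i => (((d i)⁻¹ : ℝ) : ℂ)) =
      fun k => (ρ k : ℂ) := by
    ext (i | i) <;> rfl
  rw [hδ] at hSUV hSUV₂
  obtain ⟨w, rfl, rfl⟩ := exists_eq_mul_diagonal_of_mul_diagonal_mul_star_eq hρpos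
    ((StrictAnti.injective hdec).sumElim_inv hd1) hU hV hU₂ hV₂ (hSUV.symm.trans hSUV₂)
  have hW : diagonal w = star U * (U * diagonal w) := by
    rw [← mul_assoc, (mem_unitaryGroup_iff').mp hU, one_mul]
  have hWΩ : Commute (diagonal w) (Omega n) := hW ▸ Commute.star_mul_left_of_mem_unitary hU
    ((conjSymplectic_iff_commute_omega hU).mp hUs) ((conjSymplectic_iff_commute_omega hU₂).mp hU₂s)
  have hw : ∀ k, ‖w k‖ = 1 :=
    norm_eq_one_of_diagonal_mem_unitaryGroup (hW ▸ mul_mem (Unitary.star_mem hU) hU₂)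
  choose θ hθ using fun k => (Complex.norm_eq_one_iff (w k)).mp (hw k)
  have hΘ : Sum.elim (fun i => Complex.exp (θ (Sum.inl i) * Complex.I))
      (fun i => Complex.exp (θ (Sum.inl i) * Complex.I)) = w := by
    ext (i | i)
    exacts [hθ _, (hθ _).trans (apply_inl_eq_apply_inr_of_diagonal_commute_omega hWΩ i)]
  exact ⟨θ ∘ Sum.inl, by rw [← hΘ]; rfl, by rw [← hΘ]; rfl⟩

/-- Uniqueness of the Bloch–Messiah decomposition up to a repeated diagonal phase
matrix `Θ = diag(e^{iθ₁}, …, e^{iθₙ}, e^{iθ₁}, …, e^{iθₙ})`, when all `2n` singular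
values `d₁ > … > dₙ > 1 > dₙ⁻¹ > … > d₁⁻¹` are distinct. -/
theorem bloch_messiah_uniqueness (n : ℕ)
    (S U V U₂ V₂ : Matrix (Fin n ⊕ Fin n) (Fin n ⊕ Fin n) ℂ) (d : Fin n → ℝ)
    (hS : ConjSymplectic S)
    (hdec : ∀ i j : Fin n, i < j → d j < d i) (hd1 : ∀ i : Fin n, 1 < d i)
    (hU : IsUnitaryMat U) (hUs : ConjSymplectic U)
    (hV : IsUnitaryMat V) (hVs : ConjSymplectic V)
    (hU₂ : IsUnitaryMat U₂) (hU₂s : ConjSymplectic U₂)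
    (hV₂ : IsUnitaryMat V₂) (hV₂s : ConjSymplectic V₂)
    (hSUV : S = U *
      diagonal (Sum.elim (fun i => ((d i : ℝ) : ℂ)) (fun i => (((d i)⁻¹ : ℝ) : ℂ))) * Vᴴ)
    (hSUV₂ : S = U₂ *
      diagonal (Sum.elim (fun i => ((d i : ℝ) : ℂ)) (fun i => (((d i)⁻¹ : ℝ) : ℂ))) * V₂ᴴ) :
    ∃ θ : Fin n → ℝ,
      U₂ = U * diagonal (Sum.elim (fun i => Complex.exp ((θ i : ℂ) * Complex.I))
                                  (fun i => Complex.exp ((θ i : ℂ) * Complex.I))) ∧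
      V₂ = V * diagonal (Sum.elim (fun i => Complex.exp ((θ i : ℂ) * Complex.I))
                                  (fun i => Complex.exp ((θ i : ℂ) * Complex.I))) :=
  bloch_messiah_uniqueness_general n S U V U₂ V₂ d hdec hd1 hU hUs hV hU₂ hU₂s hV₂ hSUV hSUV₂
end

section
/- Let S ∈ ℂ^(2n×2n) be conjugate symplectic, and suppose S = U D V† is any singular value decomposition of S with U, V unitary and D = diag(d₁, …, dₙ, d₁⁻¹, …, dₙ⁻¹) where d₁ > d₂ > … > dₙ > 1. Then there exist real numbers θ₁, …, θₙ such that, setting Θ = diag(e^{−iθ₁/2}, …, e^{−iθₙ/2}, e^{iθ₁/2}, …, e^{iθₙ/2}), the matrices UΘ and VΘ are unitary conjugate symplectic and S = (UΘ) D (VΘ)†. (Correctness of the algorithm producing a Bloch–Messiah decomposition from an arbitrary SVD.) -/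
open Matrix

/-!
Put `P = U†ΩU` and `Q = V†ΩV`; both are unitary, and conjugate symplecticity of `S = UDV†`
says `P = DQD`. Unitarity of `Q = D⁻¹PD⁻¹` gives `PD⁻² = D²P`, so `P` vanishes outside the
entries `(j, k)` with `dⱼdₖ = 1`, i.e. (the `dᵢ > 1` being distinct) outside `(i, n + i)` and
`(n + i, i)`; in particular `Q = P`. A skew-Hermitian unitary matrix of this shape is
`[[0, diag a], [-diag ā, 0]]` with `|aᵢ| = 1`, which is `ΘΩΘ†` for `aᵢ = e^{-iθᵢ}`. So `UΘ` and
`VΘ` are conjugate symplectic, and `ΘDΘ† = D` because diagonal matrices commute.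
-/

open Complex

section Symplectic

variable {n : ℕ}

theorem omega_conjTranspose : (Omega n)ᴴ = -Omega n := by
  simp [Omega, fromBlocks_conjTranspose, fromBlocks_neg]

theorem omega_mem_unitaryGroup : Omega n ∈ unitaryGroup (Fin n ⊕ Fin n) ℂ := by
  rw [mem_unitaryGroup_iff', star_eq_conjTranspose, omega_conjTranspose]
  simp [Omega, fromBlocks_neg, fromBlocks_multiply, ← fromBlocks_one]

theorem isUnitaryMat_iff {A : Matrix (Fin n ⊕ Fin n) (Fin n ⊕ Fin n) ℂ} :
    IsUnitaryMat A ↔ A ∈ unitaryGroup (Fin n ⊕ Fin n) ℂ :=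
  mem_unitaryGroup_iff'.symm

theorem conjSymplectic_mul_of_eq {U T : Matrix (Fin n ⊕ Fin n) (Fin n ⊕ Fin n) ℂ}
    (hU : U ∈ unitaryGroup (Fin n ⊕ Fin n) ℂ) (h : T * Omega n * Tᴴ = Uᴴ * Omega n * U) :
    ConjSymplectic (U * T) := by
  have hUU : U * Uᴴ = 1 := mem_unitaryGroup_iff.mp hU
  calc U * T * Omega n * (U * T)ᴴ = U * (T * Omega n * Tᴴ) * Uᴴ := by
        simp only [conjTranspose_mul, mul_assoc]
    _ = U * Uᴴ * Omega n * (U * Uᴴ) := by simp only [h, mul_assoc]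
    _ = Omega n := by rw [hUU, one_mul, mul_one]

theorem ConjSymplectic.conjTranspose_mul_omega_mul_eq
    {S U V D : Matrix (Fin n ⊕ Fin n) (Fin n ⊕ Fin n) ℂ} (hS : ConjSymplectic S)
    (hU : U ∈ unitaryGroup (Fin n ⊕ Fin n) ℂ) (hD : Dᴴ = D) (hSUV : S = U * D * Vᴴ) :
    Uᴴ * Omega n * U = D * (Vᴴ * Omega n * V) * D := by
  have hUU : Uᴴ * U = 1 := mem_unitaryGroup_iff'.mp hU
  calc Uᴴ * Omega n * U = Uᴴ * (S * Omega n * Sᴴ) * U := by rw [hS]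
    _ = D * (Vᴴ * Omega n * V) * D := by
        simp only [hSUV, conjTranspose_mul, conjTranspose_conjTranspose, hD, ← mul_assoc, hUU,
          one_mul]
        simp only [mul_assoc, hUU, mul_one]

theorem conjTranspose_mul_omega_mul_mem_unitaryGroup
    {W : Matrix (Fin n ⊕ Fin n) (Fin n ⊕ Fin n) ℂ} (hW : W ∈ unitaryGroup (Fin n ⊕ Fin n) ℂ) :
    Wᴴ * Omega n * W ∈ unitaryGroup (Fin n ⊕ Fin n) ℂ :=
  mul_mem (mul_mem (Unitary.star_mem hW) omega_mem_unitaryGroup) hW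

theorem conjTranspose_conjTranspose_mul_omega_mul (W : Matrix (Fin n ⊕ Fin n) (Fin n ⊕ Fin n) ℂ) :
    (Wᴴ * Omega n * W)ᴴ = -(Wᴴ * Omega n * W) := by
  simp [conjTranspose_mul, omega_conjTranspose, mul_assoc]

end Symplectic

section PositiveDiagonal

variable {m : Type*} [Fintype m] [DecidableEq m] {P Q : Matrix m m ℂ} {f : m → ℝ}

theorem diagonal_ofReal_mul_inv (hf : ∀ i, 0 < f i) :
    diagonal (fun i => (f i : ℂ)) * diagonal (fun i => (f i : ℂ)⁻¹) = 1 := by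
  rw [diagonal_mul_diagonal, ← diagonal_one]
  exact congrArg diagonal (funext fun i => mul_inv_cancel₀ (by exact_mod_cast (hf i).ne'))

theorem eq_diagonal_inv_mul_mul_diagonal_inv (hf : ∀ i, 0 < f i)
    (hPQ : P = diagonal (fun i => (f i : ℂ)) * Q * diagonal (fun i => (f i : ℂ))) :
    Q = diagonal (fun i => (f i : ℂ)⁻¹) * P * diagonal (fun i => (f i : ℂ)⁻¹) := by
  have hDE := diagonal_ofReal_mul_inv hf
  rw [hPQ, ← mul_assoc, ← mul_assoc, mul_eq_one_comm.mp hDE, one_mul, mul_assoc, hDE, mul_one]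

/-- From `Q Qᴴ = 1` one gets `P D⁻² = D² P`, so `P j k ≠ 0` forces `(f j f k)² = 1`. -/
theorem mul_eq_one_of_eq_diagonal_mul_mul_diagonal (hf : ∀ i, 0 < f i)
    (hP : P ∈ unitaryGroup m ℂ) (hQ : Q ∈ unitaryGroup m ℂ)
    (hPQ : P = diagonal (fun i => (f i : ℂ)) * Q * diagonal (fun i => (f i : ℂ)))
    {j k : m} (hjk : P j k ≠ 0) :
    f j * f k = 1 := by
  set D := diagonal (fun i => (f i : ℂ))
  set E := diagonal (fun i => (f i : ℂ)⁻¹)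
  have hDE : D * E = 1 := diagonal_ofReal_mul_inv hf
  have hED : E * D = 1 := mul_eq_one_comm.mp hDE
  have hEH : Eᴴ = E := by simp [E, diagonal_conjTranspose]
  have hPEEP : P * (E * E) * Pᴴ = D * D := by
    calc P * (E * E) * Pᴴ = D * ((E * P * E) * (E * P * E)ᴴ) * D := by
          simp only [conjTranspose_mul, hEH, ← mul_assoc, hDE, one_mul]
          simp only [mul_assoc, hED, mul_one]
      _ = D * D := by
          rw [← eq_diagonal_inv_mul_mul_diagonal_inv hf hPQ, ← star_eq_conjTranspose,
            mem_unitaryGroup_iff.mp hQ, mul_one]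
  have hcomm : P * (E * E) = D * D * P := by
    rw [← hPEEP, mul_assoc _ Pᴴ, ← star_eq_conjTranspose, mem_unitaryGroup_iff'.mp hP, mul_one]
  have hentry := congrFun (congrFun hcomm j) k
  simp only [E, D, diagonal_mul_diagonal, mul_diagonal, diagonal_mul] at hentry
  have hsq : ((f j * f k) ^ 2 : ℝ) = 1 := by
    have hfk : (f k : ℂ) ≠ 0 := by exact_mod_cast (hf k).ne'
    have := mul_left_cancel₀ hjk (hentry.trans (mul_comm _ _))
    field_simp at this
    exact_mod_cast (by push_cast; linear_combination -this : ((f j * f k : ℝ) : ℂ) ^ 2 = 1)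
  exact (pow_eq_one_iff_of_nonneg (mul_pos (hf j) (hf k)).le two_ne_zero).mp hsq

theorem eq_of_eq_diagonal_mul_mul_diagonal (hf : ∀ i, 0 < f i)
    (hP : P ∈ unitaryGroup m ℂ) (hQ : Q ∈ unitaryGroup m ℂ)
    (hPQ : P = diagonal (fun i => (f i : ℂ)) * Q * diagonal (fun i => (f i : ℂ))) :
    Q = P := by
  ext j k
  rw [eq_diagonal_inv_mul_mul_diagonal_inv hf hPQ, mul_diagonal, diagonal_mul]
  by_cases hjk : P j k = 0
  · simp [hjk]
  · have hfjk : ((f j : ℂ) * f k) = 1 := mod_cast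
      mul_eq_one_of_eq_diagonal_mul_mul_diagonal hf hP hQ hPQ hjk
    rw [mul_comm, ← mul_assoc, ← mul_inv, mul_comm (f k : ℂ), hfjk, inv_one, one_mul]

end PositiveDiagonal

theorem eq_fromBlocks_of_apply_ne_zero {n : ℕ} {P : Matrix (Fin n ⊕ Fin n) (Fin n ⊕ Fin n) ℂ}
    {d : Fin n → ℝ} (hd1 : ∀ i, 1 < d i) (hd : Function.Injective d)
    (hP : ∀ j k, P j k ≠ 0 →
      Sum.elim d (fun i => (d i)⁻¹) j * Sum.elim d (fun i => (d i)⁻¹) k = 1) :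
    P = fromBlocks 0 (diagonal fun i => P (.inl i) (.inr i))
      (diagonal fun i => P (.inr i) (.inl i)) 0 := by
  have hd0 (i : Fin n) : d i ≠ 0 := (zero_lt_one.trans (hd1 i)).ne'
  ext (i | i) (j | j) <;>
    simp only [fromBlocks_apply₁₁, fromBlocks_apply₁₂, fromBlocks_apply₂₁, fromBlocks_apply₂₂,
      Matrix.zero_apply, diagonal_apply]
  · by_contra h
    have := hP _ _ h
    simp only [Sum.elim_inl] at this
    nlinarith [hd1 i, hd1 j]
  · split_ifs with hij
    · rw [hij]
    · by_contra h
      have := hP _ _ h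
      simp only [Sum.elim_inl, Sum.elim_inr, ← div_eq_mul_inv] at this
      exact hij (hd ((div_eq_one_iff_eq (hd0 j)).mp this))
  · split_ifs with hij
    · rw [hij]
    · by_contra h
      have := hP _ _ h
      simp only [Sum.elim_inl, Sum.elim_inr, mul_comm (d i)⁻¹, ← div_eq_mul_inv] at this
      exact hij (hd ((div_eq_one_iff_eq (hd0 i)).mp this).symm)
  · by_contra h
    have := hP _ _ h
    simp only [Sum.elim_inr, ← mul_inv, inv_eq_one] at this
    nlinarith [hd1 i, hd1 j]

section Phases

variable {n : ℕ}

noncomputable def phaseDiag (θ : Fin n → ℝ) : Matrix (Fin n ⊕ Fin n) (Fin n ⊕ Fin n) ℂ :=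
  diagonal (Sum.elim (fun i => exp (-((θ i / 2 : ℝ) : ℂ) * I))
    (fun i => exp (((θ i / 2 : ℝ) : ℂ) * I)))

theorem phaseDiag_mul_omega_mul_conjTranspose (θ : Fin n → ℝ) :
    phaseDiag θ * Omega n * (phaseDiag θ)ᴴ =
      fromBlocks 0 (diagonal fun i => exp (-θ i * I)) (-diagonal fun i => exp (θ i * I)) 0 := by
  simp only [phaseDiag, Omega, ← fromBlocks_diagonal, fromBlocks_conjTranspose, fromBlocks_multiply,
    diagonal_conjTranspose]
  simp [← exp_conj, ← exp_add, map_ofNat]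
  constructor <;> intro i <;> ring_nf

theorem phaseDiag_mem_unitaryGroup (θ : Fin n → ℝ) :
    phaseDiag θ ∈ unitaryGroup (Fin n ⊕ Fin n) ℂ := by
  rw [mem_unitaryGroup_iff', phaseDiag, star_eq_conjTranspose, diagonal_conjTranspose,
    diagonal_mul_diagonal, ← diagonal_one]
  congr 1
  funext j
  cases j <;> simp [← exp_conj, ← exp_add, map_ofNat]

theorem phaseDiag_mul_diagonal_mul_conjTranspose (θ : Fin n → ℝ) (e : Fin n ⊕ Fin n → ℂ) :
    phaseDiag θ * diagonal e * (phaseDiag θ)ᴴ = diagonal e := by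
  have hcomm : phaseDiag θ * diagonal e = diagonal e * phaseDiag θ := by
    simp only [phaseDiag, diagonal_mul_diagonal, mul_comm]
  rw [hcomm, mul_assoc, ← star_eq_conjTranspose,
    mem_unitaryGroup_iff.mp (phaseDiag_mem_unitaryGroup θ), mul_one]

theorem exists_phaseDiag_mul_omega_mul_conjTranspose_eq
    {P : Matrix (Fin n ⊕ Fin n) (Fin n ⊕ Fin n) ℂ} {a b : Fin n → ℂ}
    (hP : P ∈ unitaryGroup (Fin n ⊕ Fin n) ℂ) (hskew : Pᴴ = -P)
    (hab : P = fromBlocks 0 (diagonal a) (diagonal b) 0) :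
    ∃ θ : Fin n → ℝ, phaseDiag θ * Omega n * (phaseDiag θ)ᴴ = P := by
  subst hab
  have hb : b = -star a := by
    have := congrArg toBlocks₁₂ hskew
    simp only [fromBlocks_conjTranspose, fromBlocks_neg, toBlocks_fromBlocks₁₂,
      diagonal_conjTranspose] at this
    ext i
    have hi := congrFun (congrFun this i) i
    simp only [diagonal_apply_eq, Matrix.neg_apply, Pi.star_apply] at hi
    rw [← star_star (b i), hi]
    simp
  have ha : ∀ i, ‖a i‖ = 1 := by
    intro i
    have hunit := congrArg toBlocks₁₁ (mem_unitaryGroup_iff.mp hP)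
    simp only [star_eq_conjTranspose, fromBlocks_conjTranspose, fromBlocks_multiply,
      toBlocks_fromBlocks₁₁, ← fromBlocks_one, diagonal_conjTranspose] at hunit
    have := congrFun (congrFun hunit i) i
    simp only [Matrix.zero_mul, zero_add, diagonal_mul_diagonal, diagonal_apply_eq, one_apply_eq,
      Pi.star_apply, Complex.star_def, mul_conj'] at this
    exact (pow_eq_one_iff_of_nonneg (norm_nonneg _) two_ne_zero).mp (by exact_mod_cast this)
  choose φ hφ using fun i => (norm_eq_one_iff (a i)).mp (ha i)
  refine ⟨fun i => -φ i, ?_⟩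
  rw [phaseDiag_mul_omega_mul_conjTranspose, hb]
  congr 1
  · simp [hφ]
  · rw [diagonal_neg]
    congr 1
    funext i
    simp [← hφ, ← exp_conj]

end Phases

/-- Correctness of the algorithm producing a Bloch–Messiah decomposition from an
arbitrary SVD of a conjugate symplectic matrix with distinct singular values:
there are phases `θ₁, …, θₙ` such that, with
`Θ = diag(e^{−iθ₁/2}, …, e^{−iθₙ/2}, e^{iθ₁/2}, …, e^{iθₙ/2})`, the matrices `UΘ`,
`VΘ` are unitary conjugate symplectic and `S = (UΘ) D (VΘ)†`. -/
theorem bloch_messiah_from_svd (n : ℕ)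
    (S U V : Matrix (Fin n ⊕ Fin n) (Fin n ⊕ Fin n) ℂ) (d : Fin n → ℝ)
    (hS : ConjSymplectic S)
    (hU : IsUnitaryMat U) (hV : IsUnitaryMat V)
    (hdec : ∀ i j : Fin n, i < j → d j < d i) (hd1 : ∀ i : Fin n, 1 < d i)
    (hSUV : S = U *
      diagonal (Sum.elim (fun i => ((d i : ℝ) : ℂ)) (fun i => (((d i)⁻¹ : ℝ) : ℂ))) * Vᴴ) :
    ∃ θ : Fin n → ℝ,
      IsUnitaryMat (U * diagonal (Sum.elim
          (fun i => Complex.exp (-((θ i / 2 : ℝ) : ℂ) * Complex.I))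
          (fun i => Complex.exp (((θ i / 2 : ℝ) : ℂ) * Complex.I)))) ∧
      ConjSymplectic (U * diagonal (Sum.elim
          (fun i => Complex.exp (-((θ i / 2 : ℝ) : ℂ) * Complex.I))
          (fun i => Complex.exp (((θ i / 2 : ℝ) : ℂ) * Complex.I)))) ∧
      IsUnitaryMat (V * diagonal (Sum.elim
          (fun i => Complex.exp (-((θ i / 2 : ℝ) : ℂ) * Complex.I))
          (fun i => Complex.exp (((θ i / 2 : ℝ) : ℂ) * Complex.I)))) ∧
      ConjSymplectic (V * diagonal (Sum.elim
          (fun i => Complex.exp (-((θ i / 2 : ℝ) : ℂ) * Complex.I))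
          (fun i => Complex.exp (((θ i / 2 : ℝ) : ℂ) * Complex.I)))) ∧
      S = (U * diagonal (Sum.elim
          (fun i => Complex.exp (-((θ i / 2 : ℝ) : ℂ) * Complex.I))
          (fun i => Complex.exp (((θ i / 2 : ℝ) : ℂ) * Complex.I)))) *
        diagonal (Sum.elim (fun i => ((d i : ℝ) : ℂ)) (fun i => (((d i)⁻¹ : ℝ) : ℂ))) *
        (V * diagonal (Sum.elim
          (fun i => Complex.exp (-((θ i / 2 : ℝ) : ℂ) * Complex.I))
          (fun i => Complex.exp (((θ i / 2 : ℝ) : ℂ) * Complex.I))))ᴴ := by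
  set f : Fin n ⊕ Fin n → ℝ := Sum.elim d (fun i => (d i)⁻¹)
  have hD : diagonal (Sum.elim (fun i => ((d i : ℝ) : ℂ)) (fun i => (((d i)⁻¹ : ℝ) : ℂ))) =
      diagonal (fun j => (f j : ℂ)) := by
    congr 1
    funext j
    cases j <;> rfl
  have hf : ∀ j, 0 < f j := by
    rintro (i | i) <;> simp [f, zero_lt_one.trans (hd1 i)]
  rw [hD] at hSUV ⊢
  rw [isUnitaryMat_iff] at hU hV
  have hP := conjTranspose_mul_omega_mul_mem_unitaryGroup hU
  have hQ := conjTranspose_mul_omega_mul_mem_unitaryGroup hV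
  have hPQ := hS.conjTranspose_mul_omega_mul_eq hU (by simp [diagonal_conjTranspose]) hSUV
  obtain ⟨θ, hθ⟩ := exists_phaseDiag_mul_omega_mul_conjTranspose_eq hP
    (conjTranspose_conjTranspose_mul_omega_mul U)
    (eq_fromBlocks_of_apply_ne_zero hd1 (StrictAnti.injective hdec) fun _ _ =>
      mul_eq_one_of_eq_diagonal_mul_mul_diagonal hf hP hQ hPQ)
  have hθV := hθ.trans (eq_of_eq_diagonal_mul_mul_diagonal hf hP hQ hPQ).symm
  refine ⟨θ, isUnitaryMat_iff.mpr (mul_mem hU (phaseDiag_mem_unitaryGroup θ)),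
    conjSymplectic_mul_of_eq hU hθ,
    isUnitaryMat_iff.mpr (mul_mem hV (phaseDiag_mem_unitaryGroup θ)),
    conjSymplectic_mul_of_eq hV hθV, ?_⟩
  calc S = U * (phaseDiag θ * diagonal (fun j => (f j : ℂ)) * (phaseDiag θ)ᴴ) * Vᴴ := by
        rw [phaseDiag_mul_diagonal_mul_conjTranspose, hSUV]
    _ = U * phaseDiag θ * diagonal (fun j => (f j : ℂ)) * (V * phaseDiag θ)ᴴ := by
        simp only [conjTranspose_mul, mul_assoc]
end

section
/- Let A : ℝ → ℂ^(n×n) be differentiable and suppose A(ω) = U(ω) Σ(ω) V(ω)† for all ω, where U, V : ℝ → ℂ^(n×n) are differentiable with U(ω), V(ω) unitary for all ω, and Σ(ω) = diag(σ₁(ω), …, σₙ(ω)) with differentiable σ_j satisfying σ₁(ω) > σ₂(ω) > … > σₙ(ω) > 0 for all ω. Then for every ω and every j = 1, …, n, the derivative of the j-th singular value is given by σ_j′(ω) = Re( (U(ω)† A′(ω) V(ω))_{jj} ). -/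
/-!
Since `U` and `V` are unitary, `Σ(t) = U(t)† A(t) V(t)`, so `σ_j` is the real part of the
`(j, j)` entry of this product and the product rule applies. Using `A V = U Σ` and `U† A = Σ V†`,
the two terms involving `U'` and `V'` become `(U'† U) Σ` and `Σ (V† V')`. Differentiating
`U† U = 1` shows that `U'† U` is skew-Hermitian, and likewise for `V† V'`, so their diagonal
entries are purely imaginary and contribute nothing to the real part.
-/

open Matrix

namespace Matrix

variable {𝕜 𝔸 l m n : Type*} [NontriviallyNormedField 𝕜]

-- Matrices carry no global norm instance, so derivatives of matrix-valued maps are taken entrywise.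
def HasEntrywiseDerivAt [NormedAddCommGroup 𝔸] [NormedSpace 𝕜 𝔸]
    (M : 𝕜 → Matrix m n 𝔸) (M' : Matrix m n 𝔸) (t : 𝕜) : Prop :=
  ∀ i j, HasDerivAt (fun s => M s i j) (M' i j) t

section NormedSpace

variable [NormedAddCommGroup 𝔸] [NormedSpace 𝕜 𝔸] {M : 𝕜 → Matrix m n 𝔸} {M' M'' : Matrix m n 𝔸}
  {t : 𝕜}

theorem hasEntrywiseDerivAt_of_differentiableAt
    (hM : ∀ i j, DifferentiableAt 𝕜 (fun s => M s i j) t) :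
    HasEntrywiseDerivAt M (of fun i j => deriv (fun s => M s i j) t) t :=
  fun i j => (hM i j).hasDerivAt

theorem hasEntrywiseDerivAt_const (C : Matrix m n 𝔸) (t : 𝕜) :
    HasEntrywiseDerivAt (fun _ => C) 0 t :=
  fun _ _ => hasDerivAt_const t _

theorem HasEntrywiseDerivAt.unique (h₁ : HasEntrywiseDerivAt M M' t)
    (h₂ : HasEntrywiseDerivAt M M'' t) : M' = M'' :=
  ext fun i j => (h₁ i j).unique (h₂ i j)

end NormedSpace

theorem HasEntrywiseDerivAt.mul [Fintype m] [NormedRing 𝔸] [NormedAlgebra 𝕜 𝔸]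
    {M : 𝕜 → Matrix l m 𝔸} {N : 𝕜 → Matrix m n 𝔸} {M' : Matrix l m 𝔸} {N' : Matrix m n 𝔸}
    {t : 𝕜} (hM : HasEntrywiseDerivAt M M' t) (hN : HasEntrywiseDerivAt N N' t) :
    HasEntrywiseDerivAt (fun s => M s * N s) (M' * N t + M t * N') t := by
  intro i k
  simp only [mul_apply, add_apply, ← Finset.sum_add_distrib]
  exact HasDerivAt.fun_sum fun j _ => (hM i j).mul (hN j k)

theorem HasEntrywiseDerivAt.conjTranspose [StarRing 𝕜] [TrivialStar 𝕜] [NormedAddCommGroup 𝔸]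
    [NormedSpace 𝕜 𝔸] [StarAddMonoid 𝔸] [StarModule 𝕜 𝔸] [ContinuousStar 𝔸]
    {M : 𝕜 → Matrix m n 𝔸} {M' : Matrix m n 𝔸} {t : 𝕜} (hM : HasEntrywiseDerivAt M M' t) :
    HasEntrywiseDerivAt (fun s => (M s)ᴴ) M'ᴴ t :=
  fun i j => (hM j i).star

theorem HasEntrywiseDerivAt.conjTranspose_mul_add_eq_zero [StarRing 𝕜] [TrivialStar 𝕜]
    [Fintype n] [DecidableEq n] [NormedRing 𝔸] [NormedAlgebra 𝕜 𝔸] [StarRing 𝔸]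
    [StarModule 𝕜 𝔸] [ContinuousStar 𝔸] {U : 𝕜 → Matrix n n 𝔸} {U' : Matrix n n 𝔸} {t : 𝕜}
    (hU : HasEntrywiseDerivAt U U' t) (hunit : ∀ s, (U s)ᴴ * U s = 1) :
    U'ᴴ * U t + (U t)ᴴ * U' = 0 := by
  have hconst : HasEntrywiseDerivAt (fun s => (U s)ᴴ * U s) 0 t := by
    simpa only [hunit] using hasEntrywiseDerivAt_const (1 : Matrix n n 𝔸) t
  exact (hU.conjTranspose.mul hU).unique hconst

section RCLike

variable {K : Type*} [RCLike K]

theorem re_diag_eq_zero_of_conjTranspose_add_eq_zero {X : Matrix n n K} (hX : Xᴴ + X = 0)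
    (j : n) : RCLike.re (X j j) = 0 := by
  have h := congrArg (fun Y => RCLike.re (Y j j)) hX
  simp only [add_apply, conjTranspose_apply, map_add, RCLike.star_def, RCLike.conj_re,
    zero_apply, map_zero] at h
  linarith

variable [Fintype n] [DecidableEq n] {U : ℝ → Matrix n n K} {U' : Matrix n n K} {t : ℝ}

theorem HasEntrywiseDerivAt.re_diag_conjTranspose_deriv_mul_eq_zero
    (hU : HasEntrywiseDerivAt U U' t) (hunit : ∀ s, (U s)ᴴ * U s = 1) (j : n) :
    RCLike.re ((U'ᴴ * U t) j j) = 0 := by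
  refine re_diag_eq_zero_of_conjTranspose_add_eq_zero ?_ j
  rw [conjTranspose_mul, conjTranspose_conjTranspose, add_comm]
  exact hU.conjTranspose_mul_add_eq_zero hunit

theorem HasEntrywiseDerivAt.re_diag_conjTranspose_mul_deriv_eq_zero
    (hU : HasEntrywiseDerivAt U U' t) (hunit : ∀ s, (U s)ᴴ * U s = 1) (j : n) :
    RCLike.re (((U t)ᴴ * U') j j) = 0 := by
  refine re_diag_eq_zero_of_conjTranspose_add_eq_zero ?_ j
  rw [conjTranspose_mul, conjTranspose_conjTranspose]
  exact hU.conjTranspose_mul_add_eq_zero hunit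

end RCLike

theorem hasDerivAt_singularValue {K : Type*} [RCLike K] [Fintype n] [DecidableEq n]
    {A U V : ℝ → Matrix n n K} {A' U' V' : Matrix n n K} {σ : n → ℝ → ℝ} {t : ℝ}
    (hA' : HasEntrywiseDerivAt A A' t) (hU' : HasEntrywiseDerivAt U U' t)
    (hV' : HasEntrywiseDerivAt V V' t) (hU : ∀ s, (U s)ᴴ * U s = 1)
    (hV : ∀ s, (V s)ᴴ * V s = 1) (hA : ∀ s, A s = U s * diagonal (fun i => (σ i s : K)) * (V s)ᴴ)
    (j : n) : HasDerivAt (σ j) (RCLike.re (((U t)ᴴ * A' * V t) j j)) t := by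
  have hUA : ∀ s, (U s)ᴴ * A s = diagonal (fun i => (σ i s : K)) * (V s)ᴴ := fun s => by
    rw [hA, ← Matrix.mul_assoc, ← Matrix.mul_assoc, hU, Matrix.one_mul]
  have hAV : A t * V t = U t * diagonal (fun i => (σ i t : K)) := by
    rw [hA, Matrix.mul_assoc, hV, Matrix.mul_one]
  have hσ : σ j = fun s => RCLike.re (((U s)ᴴ * A s * V s) j j) := by
    funext s
    rw [hUA, Matrix.mul_assoc, hV, Matrix.mul_one, diagonal_apply_eq, RCLike.ofReal_re]
  have hproduct : HasDerivAt (σ j)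
      (RCLike.re (((U'ᴴ * A t + (U t)ᴴ * A') * V t + (U t)ᴴ * A t * V') j j)) t := by
    rw [hσ]
    exact RCLike.reCLM.hasFDerivAt.comp_hasDerivAt t (((hU'.conjTranspose.mul hA').mul hV') j j)
  rw [Matrix.add_mul, Matrix.mul_assoc U'ᴴ, hAV, hUA, Matrix.mul_assoc (diagonal _),
    ← Matrix.mul_assoc U'ᴴ] at hproduct
  convert hproduct using 1
  simp only [add_apply, mul_diagonal, diagonal_mul, map_add, RCLike.re_mul_ofReal,
    RCLike.re_ofReal_mul, hU'.re_diag_conjTranspose_deriv_mul_eq_zero hU,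
    hV'.re_diag_conjTranspose_mul_deriv_eq_zero hV, zero_mul, mul_zero, zero_add, add_zero]

end Matrix

theorem deriv_singular_values_general (n : ℕ)
    (A U V : ℝ → Matrix (Fin n) (Fin n) ℂ) (σ : Fin n → ℝ → ℝ)
    (hAdiff : ∀ i j : Fin n, Differentiable ℝ (fun ω => A ω i j))
    (hUdiff : ∀ i j : Fin n, Differentiable ℝ (fun ω => U ω i j))
    (hVdiff : ∀ i j : Fin n, Differentiable ℝ (fun ω => V ω i j))
    (hU : ∀ ω : ℝ, (U ω)ᴴ * U ω = 1) (hV : ∀ ω : ℝ, (V ω)ᴴ * V ω = 1)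
    (hA : ∀ ω : ℝ, A ω = U ω * diagonal (fun i => ((σ i ω : ℝ) : ℂ)) * (V ω)ᴴ) :
    ∀ (ω : ℝ) (j : Fin n),
      deriv (σ j) ω =
        (((U ω)ᴴ * (Matrix.of fun i k => deriv (fun t => A t i k) ω) * V ω) j j).re := by
  intro ω j
  exact (hasDerivAt_singularValue
    (hasEntrywiseDerivAt_of_differentiableAt fun i k => (hAdiff i k).differentiableAt)
    (hasEntrywiseDerivAt_of_differentiableAt fun i k => (hUdiff i k).differentiableAt)
    (hasEntrywiseDerivAt_of_differentiableAt fun i k => (hVdiff i k).differentiableAt)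
    hU hV hA j).deriv

/-- Derivative of the singular values along a differentiable SVD with distinct positive
singular values: `σ_j′(ω) = Re((U(ω)† A′(ω) V(ω))_{jj})`. -/
theorem deriv_singular_values (n : ℕ)
    (A U V : ℝ → Matrix (Fin n) (Fin n) ℂ) (σ : Fin n → ℝ → ℝ)
    (hAdiff : ∀ i j : Fin n, Differentiable ℝ (fun ω => A ω i j))
    (hUdiff : ∀ i j : Fin n, Differentiable ℝ (fun ω => U ω i j))
    (hVdiff : ∀ i j : Fin n, Differentiable ℝ (fun ω => V ω i j))
    (hσdiff : ∀ j : Fin n, Differentiable ℝ (σ j))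
    (hU : ∀ ω : ℝ, (U ω)ᴴ * U ω = 1) (hV : ∀ ω : ℝ, (V ω)ᴴ * V ω = 1)
    (hdec : ∀ (ω : ℝ) (i j : Fin n), i < j → σ j ω < σ i ω)
    (hpos : ∀ (ω : ℝ) (j : Fin n), 0 < σ j ω)
    (hA : ∀ ω : ℝ, A ω = U ω * diagonal (fun i => ((σ i ω : ℝ) : ℂ)) * (V ω)ᴴ) :
    ∀ (ω : ℝ) (j : Fin n),
      deriv (σ j) ω =
        (((U ω)ᴴ * (Matrix.of fun i k => deriv (fun t => A t i k) ω) * V ω) j j).re :=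
  deriv_singular_values_general n A U V σ hAdiff hUdiff hVdiff hU hV hA
end

section
/- Let A : ℝ → ℂ^(n×n) be differentiable with A(ω) = A(ω)ᵀ for all ω, and suppose A(ω) = W(ω) Σ(ω) W(ω)ᵀ is a smooth Takagi decomposition: W : ℝ → ℂ^(n×n) is differentiable with W(ω) unitary for all ω, and Σ(ω) = diag(σ₁(ω), …, σₙ(ω)) with differentiable σ_j satisfying σ₁(ω) > … > σₙ(ω) > 0 for all ω. Set U = W and V = W* (entrywise conjugate), so that A = U Σ V†, and define H = U†U′ and K = V†V′. Then for all ω: K(ω) = H(ω)* (entrywise conjugate), and H_{jj}(ω) + K_{jj}(ω) = 0 for every j = 1, …, n. (A smooth Takagi decomposition satisfies the joint-minimum-variation condition.) -/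
/-!
Unitarity `W†W = 1` differentiates to `W′†W + W†W′ = 0`, i.e. `H = W†W′` is skew-Hermitian,
so its diagonal entries are purely imaginary. Since `V = W*` and differentiation commutes with
conjugation, `K = V†V′ = (W†W′)* = H*`, whence `H_{jj} + K_{jj} = H_{jj} + (H_{jj})* = 0`.
-/

open Matrix

/-- Entrywise derivative of a matrix-valued function of a real variable. -/
noncomputable def matDeriv {n : ℕ} (B : ℝ → Matrix (Fin n) (Fin n) ℂ) (ω : ℝ) :
    Matrix (Fin n) (Fin n) ℂ :=
  Matrix.of fun i j => deriv (fun t => B t i j) ω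

theorem conjTranspose_map_conj_mul_map_conj {α m n : Type*} [CommSemiring α] [StarRing α]
    [Fintype m] (M D : Matrix m n α) :
    (M.map (starRingEnd α))ᴴ * D.map (starRingEnd α) = (Mᴴ * D).map (starRingEnd α) := by
  rw [Matrix.map_mul, conjTranspose_map (starRingEnd α) fun _ => (starRingEnd_apply _).symm]

theorem matDeriv_map_conj {n : ℕ} (B : ℝ → Matrix (Fin n) (Fin n) ℂ) (ω : ℝ) :
    matDeriv (fun t => (B t).map (starRingEnd ℂ)) ω = (matDeriv B ω).map (starRingEnd ℂ) := by
  ext i j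
  simp only [matDeriv, of_apply, map_apply, starRingEnd_apply]
  exact deriv.star

theorem matDeriv_conjTranspose_mul {n : ℕ} {B C : ℝ → Matrix (Fin n) (Fin n) ℂ} {ω : ℝ}
    (hB : ∀ i j, DifferentiableAt ℝ (fun t => B t i j) ω)
    (hC : ∀ i j, DifferentiableAt ℝ (fun t => C t i j) ω) :
    matDeriv (fun t => (B t)ᴴ * C t) ω = (matDeriv B ω)ᴴ * C ω + (B ω)ᴴ * matDeriv C ω := by
  ext i j
  simp only [matDeriv, of_apply, Matrix.add_apply, mul_apply, conjTranspose_apply,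
    ← Finset.sum_add_distrib]
  exact (HasDerivAt.fun_sum fun k _ =>
    ((hB k i).hasDerivAt.star).mul (hC k j).hasDerivAt).deriv

theorem conjTranspose_mul_matDeriv_add_conjTranspose {n : ℕ} {W : ℝ → Matrix (Fin n) (Fin n) ℂ}
    {ω : ℝ} (hW : ∀ t, (W t)ᴴ * W t = 1)
    (hd : ∀ i j, DifferentiableAt ℝ (fun t => W t i j) ω) :
    (W ω)ᴴ * matDeriv W ω + ((W ω)ᴴ * matDeriv W ω)ᴴ = 0 := by
  have hconst : matDeriv (fun t => (W t)ᴴ * W t) ω = 0 := by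
    ext i j
    simp [hW, matDeriv]
  rw [conjTranspose_mul, conjTranspose_conjTranspose, add_comm,
    ← matDeriv_conjTranspose_mul hd hd, hconst]

theorem takagi_is_joint_minimum_variation_general (n : ℕ)
    (W : ℝ → Matrix (Fin n) (Fin n) ℂ)
    (hWdiff : ∀ i j : Fin n, Differentiable ℝ (fun ω => W ω i j))
    (hW : ∀ ω : ℝ, (W ω)ᴴ * W ω = 1) :
    ∀ ω : ℝ,
      ((fun t => (W t).map (starRingEnd ℂ)) ω)ᴴ *
          matDeriv (fun t => (W t).map (starRingEnd ℂ)) ω =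
        ((W ω)ᴴ * matDeriv W ω).map (starRingEnd ℂ) ∧
      ∀ j : Fin n,
        ((W ω)ᴴ * matDeriv W ω) j j +
          (((fun t => (W t).map (starRingEnd ℂ)) ω)ᴴ *
            matDeriv (fun t => (W t).map (starRingEnd ℂ)) ω) j j = 0 := by
  intro ω
  have hKH : ((W ω).map (starRingEnd ℂ))ᴴ * matDeriv (fun t => (W t).map (starRingEnd ℂ)) ω =
      ((W ω)ᴴ * matDeriv W ω).map (starRingEnd ℂ) := by
    rw [matDeriv_map_conj, conjTranspose_map_conj_mul_map_conj]
  refine ⟨hKH, fun j => ?_⟩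
  have hskew := conjTranspose_mul_matDeriv_add_conjTranspose hW fun i j => hWdiff i j ω
  beta_reduce
  rw [hKH]
  simpa only [Matrix.add_apply, conjTranspose_apply, map_apply, starRingEnd_apply,
    Matrix.zero_apply] using congr_fun₂ hskew j j

/-- A smooth Takagi decomposition `A = W Σ Wᵀ` of a complex symmetric matrix function,
viewed as the SVD `A = U Σ V†` with `U = W` and `V = W*`, satisfies `K = H*` and the
joint-minimum-variation condition `H_{jj} + K_{jj} = 0`, where `H = U†U′`, `K = V†V′`. -/
theorem takagi_is_joint_minimum_variation (n : ℕ)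
    (A W : ℝ → Matrix (Fin n) (Fin n) ℂ) (σ : Fin n → ℝ → ℝ)
    (hAdiff : ∀ i j : Fin n, Differentiable ℝ (fun ω => A ω i j))
    (hWdiff : ∀ i j : Fin n, Differentiable ℝ (fun ω => W ω i j))
    (hσdiff : ∀ j : Fin n, Differentiable ℝ (σ j))
    (hAsym : ∀ ω : ℝ, A ω = (A ω)ᵀ)
    (hW : ∀ ω : ℝ, (W ω)ᴴ * W ω = 1)
    (hdec : ∀ (ω : ℝ) (i j : Fin n), i < j → σ j ω < σ i ω)
    (hpos : ∀ (ω : ℝ) (j : Fin n), 0 < σ j ω)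
    (hA : ∀ ω : ℝ, A ω = W ω * diagonal (fun i => ((σ i ω : ℝ) : ℂ)) * (W ω)ᵀ) :
    ∀ ω : ℝ,
      ((fun t => (W t).map (starRingEnd ℂ)) ω)ᴴ *
          matDeriv (fun t => (W t).map (starRingEnd ℂ)) ω =
        ((W ω)ᴴ * matDeriv W ω).map (starRingEnd ℂ) ∧
      ∀ j : Fin n,
        ((W ω)ᴴ * matDeriv W ω) j j +
          (((fun t => (W t).map (starRingEnd ℂ)) ω)ᴴ *
            matDeriv (fun t => (W t).map (starRingEnd ℂ)) ω) j j = 0 :=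
  takagi_is_joint_minimum_variation_general n W hWdiff hW
end

section
/- Let A : ℝ → ℂ^(n×n) be continuously differentiable with A(ω) = A(ω)ᵀ for all ω, and suppose A(ω) = U(ω) Σ(ω) V(ω)† for all ω, where U, V : ℝ → ℂ^(n×n) are continuously differentiable with U(ω), V(ω) unitary for all ω, and Σ(ω) = diag(σ₁(ω), …, σₙ(ω)) with σ₁(ω) > … > σₙ(ω) > 0 for all ω. Assume the joint-minimum-variation condition holds: (U(ω)†U′(ω))_{jj} + (V(ω)†V′(ω))_{jj} = 0 for all j and all ω. If V(0) = U(0)* (entrywise conjugate), then V(ω) = U(ω)* for all ω; consequently A(ω) = U(ω) Σ(ω) U(ω)ᵀ is a smooth Takagi decomposition of A. -/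
open Matrix

/-!
Put `W = Uᵀ V`. Since `A` is symmetric, `AᴴA = V Σ² Vᴴ` is also the entrywise conjugate of
`AAᴴ = U Σ² Uᴴ`, so the unitary `W` commutes with `Σ²`. The `σⱼ²` being distinct, `W` is diagonal
with unimodular entries `wⱼ`, that is `V = U* diag(w)`. Substituted into the
joint-minimum-variation condition this gives `conj(wⱼ) wⱼ′ = 0`, so each `wⱼ` is constant, equal
to its value `1` at `ω = 0`.
-/

namespace Matrix

variable {m n R : Type*} [CommRing R]

theorem conjTranspose_map_starRingEnd [StarRing R] (M : Matrix m n R) :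
    (M.map (starRingEnd R))ᴴ = Mᵀ := by
  ext i j
  simp [starRingEnd_apply]

theorem IsSymm.conjTranspose_mul_self [StarRing R] [Fintype m] {A : Matrix m m R}
    (hA : A.IsSymm) : Aᴴ * A = (A * Aᴴ).map (starRingEnd R) := by
  have hconj : Aᴴ = A.map (starRingEnd R) := by
    conv_lhs => rw [← hA.eq]
    rfl
  rw [Matrix.map_mul, ← hconj]
  congr 1
  rw [hconj, Matrix.map_map]
  ext
  simp [starRingEnd_apply]

variable [Fintype m] [DecidableEq m]

theorem isDiag_of_commute_diagonal [NoZeroDivisors R] {M : Matrix m m R} {d : m → R}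
    (hd : Function.Injective d) (h : Commute M (diagonal d)) : M.IsDiag := by
  intro i j hij
  have h := congrFun₂ h.eq i j
  rw [mul_diagonal, diagonal_mul, mul_comm (d i)] at h
  exact (mul_eq_mul_left_iff.1 h).resolve_left (hd.ne hij).symm

section StarRing

variable [StarRing R]

theorem transpose_mul_map_starRingEnd {U : Matrix m m R} (hU : U ∈ unitaryGroup m R) :
    Uᵀ * U.map (starRingEnd R) = 1 :=
  mem_unitaryGroup_iff.1 (transpose_mem_unitaryGroup_iff.2 hU)

theorem map_starRingEnd_mul_transpose {U : Matrix m m R} (hU : U ∈ unitaryGroup m R) :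
    U.map (starRingEnd R) * Uᵀ = 1 :=
  mem_unitaryGroup_iff'.1 (transpose_mem_unitaryGroup_iff.2 hU)

theorem conjTranspose_mul_self_of_eq_mul_mul_conjTranspose {A U V S : Matrix m m R}
    (hU : U ∈ unitaryGroup m R) (hS : Sᴴ = S) (hA : A = U * S * Vᴴ) :
    Aᴴ * A = V * (S * S) * Vᴴ := by
  have hUU : Uᴴ * U = 1 := mem_unitaryGroup_iff'.1 hU
  subst hA
  simp only [conjTranspose_mul, conjTranspose_conjTranspose, hS, Matrix.mul_assoc]
  rw [← Matrix.mul_assoc Uᴴ, hUU, Matrix.one_mul]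

theorem commute_conjTranspose_mul_of_mul_mul_conjTranspose_eq {P Q D : Matrix m m R}
    (hP : P ∈ unitaryGroup m R) (hQ : Q ∈ unitaryGroup m R) (h : P * D * Pᴴ = Q * D * Qᴴ) :
    Commute (Qᴴ * P) D := by
  have hPP : Pᴴ * P = 1 := mem_unitaryGroup_iff'.1 hP
  have hQQ : Qᴴ * Q = 1 := mem_unitaryGroup_iff'.1 hQ
  calc Qᴴ * P * D = Qᴴ * (P * D * Pᴴ) * P := by
        simp only [Matrix.mul_assoc, hPP, Matrix.mul_one]
    _ = Qᴴ * (Q * D * Qᴴ) * P := by rw [h]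
    _ = D * (Qᴴ * P) := by
        simp only [← Matrix.mul_assoc, hQQ, Matrix.one_mul]

theorem isDiag_transpose_mul_of_isSymm [NoZeroDivisors R] {A U V : Matrix m m R} {s : m → R}
    (hA : A.IsSymm) (hU : U ∈ unitaryGroup m R) (hV : V ∈ unitaryGroup m R) (hs : star s = s)
    (hss : Function.Injective fun i => s i * s i) (hAUV : A = U * diagonal s * Vᴴ) :
    (Uᵀ * V).IsDiag := by
  have hS : (diagonal s)ᴴ = diagonal s := by rw [diagonal_conjTranspose, hs]
  have hA_conj : Aᴴ = V * diagonal s * Uᴴ := by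
    rw [hAUV, conjTranspose_mul, conjTranspose_mul, conjTranspose_conjTranspose, hS,
      Matrix.mul_assoc]
  have hSS : (diagonal fun i => s i * s i).map (starRingEnd R) = diagonal fun i => s i * s i := by
    rw [diagonal_map (map_zero _)]
    congr 1
    funext i
    rw [map_mul, starRingEnd_apply, ← Pi.star_apply, hs]
  have hV_gram := conjTranspose_mul_self_of_eq_mul_mul_conjTranspose hU hS hAUV
  have hU_gram := conjTranspose_mul_self_of_eq_mul_mul_conjTranspose hV hS hA_conj
  rw [conjTranspose_conjTranspose] at hU_gram
  have h := hA.conjTranspose_mul_self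
  rw [hV_gram, hU_gram, diagonal_mul_diagonal, Matrix.map_mul, Matrix.map_mul, hSS,
    conjTranspose_map (starRingEnd R) fun _ => rfl] at h
  rw [← conjTranspose_map_starRingEnd U]
  exact isDiag_of_commute_diagonal hss <| commute_conjTranspose_mul_of_mul_mul_conjTranspose_eq
    hV (map_star_mem_unitaryGroup_iff.2 hU) h

theorem IsDiag.star_mul_self_apply {W : Matrix m m R} (hd : W.IsDiag)
    (hW : W ∈ unitaryGroup m R) (j : m) : star (W j j) * W j j = 1 := by
  have h := congrFun₂ (mem_unitaryGroup_iff'.1 hW) j j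
  rwa [← hd.diagonal_diag, star_eq_conjTranspose, diagonal_conjTranspose,
    diagonal_mul_diagonal, diagonal_apply_eq, one_apply_eq] at h

theorem eq_map_starRingEnd_mul_diagonal {U V : Matrix m m R} (hU : U ∈ unitaryGroup m R)
    (hd : (Uᵀ * V).IsDiag) : V = U.map (starRingEnd R) * diagonal (Uᵀ * V).diag := by
  rw [hd.diagonal_diag, ← Matrix.mul_assoc, map_starRingEnd_mul_transpose hU, Matrix.one_mul]

theorem conjTranspose_mul_add_conjTranspose_mul_apply_self {U V U' V' : Matrix m m R}
    {w : m → R} (hV : V = U.map (starRingEnd R) * diagonal w) {j : m}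
    (hw : star (w j) * w j = 1) :
    (Uᴴ * U') j j + (Vᴴ * V') j j = star (w j) * (U'ᵀ * V + Uᵀ * V') j j := by
  have hU' : (U'ᵀ * V) j j = (Uᴴ * U') j j * w j := by
    rw [hV, ← Matrix.mul_assoc, mul_diagonal, ← transpose_apply (Uᴴ * U'), transpose_mul,
      conjTranspose_transpose]
    rfl
  have hV' : (Vᴴ * V') j j = star (w j) * (Uᵀ * V') j j := by
    rw [hV, conjTranspose_mul, conjTranspose_map_starRingEnd, diagonal_conjTranspose,
      Matrix.mul_assoc, diagonal_mul]
    rfl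
  rw [add_apply, hU', hV']
  linear_combination (-(Uᴴ * U') j j) * hw

end StarRing

end Matrix

theorem StrictAnti.injective_ofReal_mul_self {ι : Type*} [LinearOrder ι] {σ : ι → ℝ}
    (hσ : StrictAnti σ) (hpos : ∀ i, 0 < σ i) : Function.Injective fun i => (σ i : ℂ) * σ i := by
  have hsq : StrictAnti fun i => σ i ^ 2 := fun i j hij =>
    pow_lt_pow_left₀ (hσ hij) (hpos j).le two_ne_zero
  intro i j hij
  exact hsq.injective (Complex.ofReal_injective (by push_cast; linear_combination hij))

theorem hasDerivAt_transpose_mul_apply {n : ℕ} {U V : ℝ → Matrix (Fin n) (Fin n) ℂ} {ω : ℝ}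
    (hU : ∀ i j, DifferentiableAt ℝ (fun t => U t i j) ω)
    (hV : ∀ i j, DifferentiableAt ℝ (fun t => V t i j) ω) (i j : Fin n) :
    HasDerivAt (fun t => ((U t)ᵀ * V t) i j)
      (((matDeriv U ω)ᵀ * V ω + (U ω)ᵀ * matDeriv V ω) i j) ω := by
  simp only [mul_apply, transpose_apply, Matrix.add_apply, matDeriv, of_apply,
    ← Finset.sum_add_distrib]
  exact HasDerivAt.fun_sum fun k _ => (hU k i).hasDerivAt.fun_mul (hV k j).hasDerivAt

theorem hasDerivAt_transpose_mul_apply_self_zero {n : ℕ} {U V : ℝ → Matrix (Fin n) (Fin n) ℂ}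
    {ω : ℝ} {w : Fin n → ℂ} {j : Fin n}
    (hU : ∀ i j, DifferentiableAt ℝ (fun t => U t i j) ω)
    (hV : ∀ i j, DifferentiableAt ℝ (fun t => V t i j) ω)
    (hVw : V ω = (U ω).map (starRingEnd ℂ) * diagonal w) (hw : star (w j) * w j = 1)
    (hjmv : ((U ω)ᴴ * matDeriv U ω) j j + ((V ω)ᴴ * matDeriv V ω) j j = 0) :
    HasDerivAt (fun t => ((U t)ᵀ * V t) j j) 0 ω := by
  set D := ((matDeriv U ω)ᵀ * V ω + (U ω)ᵀ * matDeriv V ω) j j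
  have hstat : star (w j) * D = 0 :=
    (conjTranspose_mul_add_conjTranspose_mul_apply_self hVw hw).symm.trans hjmv
  have hD : D = 0 := by linear_combination w j * hstat - D * hw
  exact hD ▸ hasDerivAt_transpose_mul_apply hU hV j j

theorem joint_minimum_variation_is_takagi_general (n : ℕ)
    (A U V : ℝ → Matrix (Fin n) (Fin n) ℂ) (σ : Fin n → ℝ → ℝ)
    (hUdiff : ∀ i j : Fin n, ContDiff ℝ 1 (fun ω => U ω i j))
    (hVdiff : ∀ i j : Fin n, ContDiff ℝ 1 (fun ω => V ω i j))
    (hAsym : ∀ ω : ℝ, A ω = (A ω)ᵀ)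
    (hU : ∀ ω : ℝ, (U ω)ᴴ * U ω = 1) (hV : ∀ ω : ℝ, (V ω)ᴴ * V ω = 1)
    (hdec : ∀ (ω : ℝ) (i j : Fin n), i < j → σ j ω < σ i ω)
    (hpos : ∀ (ω : ℝ) (j : Fin n), 0 < σ j ω)
    (hA : ∀ ω : ℝ, A ω = U ω * diagonal (fun i => ((σ i ω : ℝ) : ℂ)) * (V ω)ᴴ)
    (hjmv : ∀ (ω : ℝ) (j : Fin n),
      ((U ω)ᴴ * matDeriv U ω) j j + ((V ω)ᴴ * matDeriv V ω) j j = 0)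
    (h0 : V 0 = (U 0).map (starRingEnd ℂ)) :
    ∀ ω : ℝ,
      V ω = (U ω).map (starRingEnd ℂ) ∧
      A ω = U ω * diagonal (fun i => ((σ i ω : ℝ) : ℂ)) * (U ω)ᵀ := by
  have hUu ω : U ω ∈ unitaryGroup (Fin n) ℂ := mem_unitaryGroup_iff'.2 (hU ω)
  have hVu ω : V ω ∈ unitaryGroup (Fin n) ℂ := mem_unitaryGroup_iff'.2 (hV ω)
  have hdiag ω : ((U ω)ᵀ * V ω).IsDiag :=
    isDiag_transpose_mul_of_isSymm (hAsym ω).symm (hUu ω) (hVu ω)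
      (funext fun i => Complex.conj_ofReal _)
      (StrictAnti.injective_ofReal_mul_self (fun i j => hdec ω i j) (hpos ω)) (hA ω)
  have hVw ω := eq_map_starRingEnd_mul_diagonal (hUu ω) (hdiag ω)
  have hderiv j ω := hasDerivAt_transpose_mul_apply_self_zero
    (fun i j => (hUdiff i j).differentiable one_ne_zero ω)
    (fun i j => (hVdiff i j).differentiable one_ne_zero ω) (hVw ω)
    ((hdiag ω).star_mul_self_apply (mul_mem (transpose_mem_unitaryGroup_iff.2 (hUu ω)) (hVu ω)) j)
    (hjmv ω j)
  have hphase_one ω j : ((U ω)ᵀ * V ω) j j = 1 := by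
    rw [is_const_of_deriv_eq_zero (fun t => (hderiv j t).differentiableAt)
      (fun t => (hderiv j t).deriv) ω 0, h0, transpose_mul_map_starRingEnd (hUu 0), one_apply_eq]
  have hVU ω : V ω = (U ω).map (starRingEnd ℂ) := by
    rw [hVw ω, show ((U ω)ᵀ * V ω).diag = fun _ => 1 from funext (hphase_one ω), diagonal_one,
      Matrix.mul_one]
  exact fun ω => ⟨hVU ω, by rw [hA ω, hVU ω, conjTranspose_map_starRingEnd]⟩

/-- A joint-minimum-variation SVD of a complex symmetric matrix function whose unitary
factors satisfy `V(0) = U(0)*` is a smooth Takagi decomposition: `V(ω) = U(ω)*` for all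
`ω`, and hence `A(ω) = U(ω) Σ(ω) U(ω)ᵀ`. -/
theorem joint_minimum_variation_is_takagi (n : ℕ)
    (A U V : ℝ → Matrix (Fin n) (Fin n) ℂ) (σ : Fin n → ℝ → ℝ)
    (hAdiff : ∀ i j : Fin n, ContDiff ℝ 1 (fun ω => A ω i j))
    (hUdiff : ∀ i j : Fin n, ContDiff ℝ 1 (fun ω => U ω i j))
    (hVdiff : ∀ i j : Fin n, ContDiff ℝ 1 (fun ω => V ω i j))
    (hAsym : ∀ ω : ℝ, A ω = (A ω)ᵀ)
    (hU : ∀ ω : ℝ, (U ω)ᴴ * U ω = 1) (hV : ∀ ω : ℝ, (V ω)ᴴ * V ω = 1)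
    (hdec : ∀ (ω : ℝ) (i j : Fin n), i < j → σ j ω < σ i ω)
    (hpos : ∀ (ω : ℝ) (j : Fin n), 0 < σ j ω)
    (hA : ∀ ω : ℝ, A ω = U ω * diagonal (fun i => ((σ i ω : ℝ) : ℂ)) * (V ω)ᴴ)
    (hjmv : ∀ (ω : ℝ) (j : Fin n),
      ((U ω)ᴴ * matDeriv U ω) j j + ((V ω)ᴴ * matDeriv V ω) j j = 0)
    (h0 : V 0 = (U 0).map (starRingEnd ℂ)) :
    ∀ ω : ℝ,
      V ω = (U ω).map (starRingEnd ℂ) ∧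
      A ω = U ω * diagonal (fun i => ((σ i ω : ℝ) : ℂ)) * (U ω)ᵀ :=
  joint_minimum_variation_is_takagi_general n A U V σ hUdiff hVdiff hAsym hU hV hdec hpos hA hjmv h0
end
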